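/- For any n-bit key ω, the sequence P_s(1), P_s(2), ..., P_s(n+1) (the first n+1 values of the self-inverting permutation P_s in index order) is bitonic: it strictly increases up to some position and strictly decreases afterwards. -/

import Mathlib

/-!
`B*` starts with `n` ones followed by a zero (the complement of the leading bit of `ω`), so
`P_b` starts with `n + 1` and ends with `n, n - 1, …, 1`. As `P_s` pairs `b_i` with
`b_{2n+2-i}`, this gives `P_s (i + 1) = b_{i+1}` for `i < n` and `P_s (n + 1) = b_{2n+1}`:
the sequence `P_s 1, …, P_s (n + 1)` is a subsequence of `P_b`. Now `P_b` is an ascending run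
of distinct values followed by a descending one, and every subsequence of such a list is again
bitonic.
-/

/-- Binary representation of `ω`, most significant bit first. -/
def binRep (ω : ℕ) : List Bool := (Nat.bits ω).reverse

/-- The extended binary `B*`: `n` ones, then the one's complement of `B`, then a zero. -/
def extBin (ω : ℕ) : List Bool :=
  List.replicate (binRep ω).length true ++ (binRep ω).map (!·) ++ [false]

/-- Ascending list of 1-indexed positions of bit `b` in the bit string `l`. -/
def posOf (l : List Bool) (b : Bool) : List ℕ :=
  ((List.range l.length).filter (fun i => l.getD i false == b)).map (· + 1)

/-- `Z₀`: ascending positions of zeros in `B*`. -/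
def Z0 (ω : ℕ) : List ℕ := posOf (extBin ω) false

/-- `Z₁`: ascending positions of ones in `B*`. -/
def Z1 (ω : ℕ) : List ℕ := posOf (extBin ω) true

/-- Bitonic permutation `P_b = Z₀ ++ reverse Z₁`. -/
def Pb (ω : ℕ) : List ℕ := Z0 ω ++ (Z1 ω).reverse

/-- The self-inverting permutation `P_s`: it pairs the elements of `P_b`
equidistant from its extremes, i.e. `P_s (b_{2n+2-i}) = b_i`. -/
def Ps (ω : ℕ) (x : ℕ) : ℕ :=
  (Pb ω).getD ((Pb ω).length - 1 - (Pb ω).idxOf x) 0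

open List

namespace List

theorem take_append_getLast_sublist {α : Type*} {l : List α} {n : ℕ} (hn : n < l.length) :
    l.take n ++ [l.getLast (ne_nil_of_length_pos (by omega))] <+ l := by
  conv_rhs => rw [← take_append_drop n l]
  refine (Sublist.refl _).append (singleton_sublist.2 ?_)
  rw [← getLast_drop (by simpa using hn)]
  exact getLast_mem _

variable {α : Type*} [LinearOrder α]

def IsBitonic (l : List α) : Prop :=
  ∃ a d, l = a ++ d ∧ a.Pairwise (· < ·) ∧ d.Pairwise (· > ·)

theorem IsBitonic.sublist {l l' : List α} (h : l.IsBitonic) (hs : l' <+ l) : l'.IsBitonic := by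
  obtain ⟨a, d, rfl, ha, hd⟩ := h
  obtain ⟨a', d', rfl, ha', hd'⟩ := sublist_append_iff.1 hs
  exact ⟨a', d', rfl, ha.sublist ha', hd.sublist hd'⟩

theorem IsBitonic.exists_peak {l : List α} (h : l.IsBitonic) (hnd : l.Nodup) (hne : l ≠ []) :
    ∃ a p d, l = a ++ p :: d ∧ (a ++ [p]).Pairwise (· < ·) ∧ (p :: d).Pairwise (· > ·) := by
  obtain ⟨a, d, rfl, ha, hd⟩ := h
  rcases eq_nil_or_concat' a with rfl | ⟨a, x, rfl⟩
  · obtain ⟨p, d, rfl⟩ := exists_cons_of_ne_nil hne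
    exact ⟨[], p, d, rfl, by simp, hd⟩
  rcases d with _ | ⟨y, d⟩
  · exact ⟨a, x, [], by simp, ha, by simp⟩
  have hxy : x ≠ y := by
    intro hxy
    simp [hxy, nodup_append] at hnd
  rcases hxy.lt_or_gt with hxy | hxy
  · refine ⟨a ++ [x], y, d, by simp, ?_, hd⟩
    simp only [pairwise_append] at ha ⊢
    grind
  · refine ⟨a, x, y :: d, by simp, ha, ?_⟩
    simp only [pairwise_cons] at hd ⊢
    grind

theorem IsBitonic.exists_turn {l : List α} (h : l.IsBitonic) (hnd : l.Nodup) (hne : l ≠ []) :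
    ∃ k < l.length, (∀ i (hi : i + 1 < l.length), i < k → l[i] < l[i + 1]) ∧
      ∀ i (hi : i + 1 < l.length), k ≤ i → l[i + 1] < l[i] := by
  obtain ⟨a, p, d, rfl, hasc, hdesc⟩ := h.exists_peak hnd hne
  refine ⟨a.length, by simp, fun i hi hik => ?_, fun i hi hki => ?_⟩
  · have e : a ++ p :: d = a ++ [p] ++ d := by simp
    have := pairwise_iff_getElem.1 hasc i (i + 1) (by simp; omega) (by simp; omega) (by omega)
    simp only [e]
    rwa [getElem_append_left (as := a ++ [p]), getElem_append_left (as := a ++ [p])]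
  · simp only [length_append, length_cons] at hi
    have := pairwise_iff_getElem.1 hdesc (i - a.length) (i + 1 - a.length)
      (by simp; omega) (by simp; omega) (by omega)
    rwa [getElem_append_right hki, getElem_append_right (by omega)]

end List

theorem Nat.exists_bits_eq_append_true {ω : ℕ} (hω : ω ≠ 0) : ∃ l, ω.bits = l ++ [true] := by
  induction ω using Nat.binaryRec' with
  | zero => contradiction
  | bit b n hbn ih =>
    rw [Nat.bits_append_bit _ _ hbn]
    rcases eq_or_ne n 0 with rfl | hn
    · exact ⟨[], by simp [hbn rfl]⟩
    · obtain ⟨l, hl⟩ := ih hn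
      exact ⟨b :: l, by simp [hl]⟩

theorem posOf_append (l₁ l₂ : List Bool) (b : Bool) :
    posOf (l₁ ++ l₂) b = posOf l₁ b ++ (posOf l₂ b).map (· + l₁.length) := by
  simp only [posOf, length_append, range_add, filter_append, map_append, filter_map, map_map]
  congr 1
  · congr 1
    refine filter_congr fun i hi => ?_
    rw [getD_append _ _ _ _ (mem_range.1 hi)]
  · congr 1
    · funext i
      simp only [Function.comp]
      omega
    · refine filter_congr fun i _ => ?_
      simp only [Function.comp, getD_append_right _ _ _ _ (Nat.le_add_right _ _),
        Nat.add_sub_cancel_left]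

theorem posOf_replicate_self (n : ℕ) (b : Bool) : posOf (replicate n b) b = range' 1 n := by
  simp only [posOf, length_replicate, range'_eq_map_range, Nat.add_comm 1]
  congr 1
  refine filter_eq_self.2 fun i hi => ?_
  simp_all

theorem posOf_replicate_of_ne {b c : Bool} (h : c ≠ b) (n : ℕ) : posOf (replicate n c) b = [] := by
  simp only [posOf, map_eq_nil_iff, filter_eq_nil_iff]
  simp_all

theorem posOf_cons_self (b : Bool) (l : List Bool) :
    posOf (b :: l) b = 1 :: (posOf l b).map (· + 1) := by
  simpa [posOf] using posOf_append [b] l b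

theorem pairwise_posOf (l : List Bool) (b : Bool) : (posOf l b).Pairwise (· < ·) :=
  (pairwise_lt_range.filter _).map _ fun _ _ => Nat.succ_lt_succ

theorem mem_posOf {l : List Bool} {b : Bool} {x : ℕ} :
    x ∈ posOf l b ↔ ∃ j < l.length, l.getD j false = b ∧ j + 1 = x := by
  simp [posOf, and_assoc]

theorem disjoint_posOf {b c : Bool} (h : b ≠ c) (l : List Bool) :
    Disjoint (posOf l b) (posOf l c) := by
  simp only [List.disjoint_left, mem_posOf]
  rintro _ ⟨j, -, rfl, rfl⟩ ⟨j', -, hj', hjj'⟩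
  obtain rfl : j' = j := by omega
  exact h hj'

theorem exists_binRep_eq_true_cons {ω : ℕ} (hω : ω ≠ 0) : ∃ r, binRep ω = true :: r := by
  obtain ⟨l, hl⟩ := Nat.exists_bits_eq_append_true hω
  exact ⟨l.reverse, by simp [binRep, hl]⟩

theorem extBin_eq_replicate_append (ω : ℕ) :
    extBin ω = replicate (binRep ω).length true ++ ((binRep ω).map (!·) ++ [false]) := by
  simp [extBin]

theorem exists_Z0_eq_cons {ω : ℕ} (hω : ω ≠ 0) : ∃ s, Z0 ω = ((binRep ω).length + 1) :: s := by
  obtain ⟨r, hr⟩ := exists_binRep_eq_true_cons hω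
  rw [Z0, extBin_eq_replicate_append, posOf_append, posOf_replicate_of_ne (by decide), hr]
  simp [posOf_cons_self, Nat.add_comm]

theorem exists_Z1_eq_range'_append (ω : ℕ) : ∃ s, Z1 ω = range' 1 (binRep ω).length ++ s := by
  rw [Z1, extBin_eq_replicate_append, posOf_append, posOf_replicate_self]
  exact ⟨_, rfl⟩

theorem isBitonic_Pb (ω : ℕ) : (Pb ω).IsBitonic :=
  ⟨Z0 ω, (Z1 ω).reverse, rfl, pairwise_posOf _ _,
    pairwise_reverse.2 <| (pairwise_posOf _ _).imp fun h => h⟩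

theorem nodup_Pb (ω : ℕ) : (Pb ω).Nodup := by
  refine nodup_append.2 ⟨(pairwise_posOf _ _).nodup, nodup_reverse.2 (pairwise_posOf _ _).nodup,
    fun a ha b hb hab => ?_⟩
  rw [mem_reverse] at hb
  exact disjoint_posOf (by decide) _ ha (hab ▸ hb)

theorem Ps_getElem_reverse (ω i : ℕ) (hi : i < (Pb ω).length) :
    Ps ω ((Pb ω).reverse[i]'(by simpa using hi)) = (Pb ω)[i] := by
  rw [Ps, getElem_reverse, (nodup_Pb ω).idxOf_getElem, getD_eq_getElem _ _ (by omega)]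
  congr 1
  omega

theorem map_Ps_range_sublist_Pb {ω n : ℕ} (hω : ω ≠ 0) (hn : (binRep ω).length = n) :
    (range (n + 1)).map (fun i => Ps ω (i + 1)) <+ Pb ω := by
  obtain ⟨s, hZ0⟩ := exists_Z0_eq_cons hω
  obtain ⟨t, hZ1⟩ := exists_Z1_eq_range'_append ω
  rw [hn] at hZ0 hZ1
  have hrev : (Pb ω).reverse = range' 1 n ++ (t ++ (Z0 ω).reverse) := by simp [Pb, hZ1]
  have hlen : n < (Pb ω).length := by simp [Pb, hZ0, hZ1]; omega
  have hlow : ∀ i (hi : i < n), Ps ω (i + 1) = (Pb ω)[i] := by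
    intro i hi
    have : (Pb ω).reverse[i]'(by simp; omega) = i + 1 := by
      simp [hrev, getElem_append_left, hi, Nat.add_comm]
    rw [← this, Ps_getElem_reverse]
  have htop : Ps ω (n + 1) = (Pb ω).getLast (ne_nil_of_length_pos (by omega)) := by
    have : (Pb ω).reverse[(Pb ω).length - 1]'(by simp; omega) = n + 1 := by
      simp [Pb, hZ0]
    rw [← this, Ps_getElem_reverse, getLast_eq_getElem]
  have : (range (n + 1)).map (fun i => Ps ω (i + 1)) =
      (Pb ω).take n ++ [(Pb ω).getLast (ne_nil_of_length_pos (by omega))] := by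
    rw [range_succ, map_append, map_singleton, htop, append_left_inj]
    refine ext_getElem (by simp; omega) fun i h1 _ => ?_
    simp only [length_map, length_range] at h1
    simp [hlow i h1]
  rw [this]
  exact take_append_getLast_sublist hlen

/-- The subsequence `P_s 1, P_s 2, …, P_s (n+1)` is bitonic: it strictly increases up
to some position `k` and strictly decreases afterwards. -/
theorem stmt15 (ω n : ℕ) (hω : 0 < ω) (hn : (binRep ω).length = n) :
    ∃ k, k < n + 1 ∧
      (∀ i, i < k → Ps ω (i + 1) < Ps ω (i + 2)) ∧
      (∀ i, k ≤ i → i + 1 < n + 1 → Ps ω (i + 2) < Ps ω (i + 1)) := by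
  have hsub := map_Ps_range_sublist_Pb hω.ne' hn
  obtain ⟨k, hk, hinc, hdec⟩ :=
    ((isBitonic_Pb ω).sublist hsub).exists_turn ((nodup_Pb ω).sublist hsub) (by simp)
  simp only [length_map, length_range, getElem_map, getElem_range] at hk hinc hdec
  exact ⟨k, hk, fun i hi => hinc i (by omega) hi, fun i hki hi => hdec i hi hki⟩
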